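/- Let a, ζ ∈ ℝ, b ≠ 0, θ₀, θ₁ ∈ ℝ, let K be a finite set, A : K → ℝ, and let ω_k ≠ 0 for each k ∈ K; set φ := 2θ₀. Then the function θ(τ) := θ₀ + (a/b²) τ + (e^τ − 1) [ θ₁ − a/b² − (ζ/b²) cos φ Σ_{k∈K} A_k ω_k/(1 + ω_k²) ] − (ζ/b²) Σ_{k∈K} (A_k/(1 + ω_k²)) [ (cos(ω_k τ + φ) − cos φ)/ω_k − sin(ω_k τ + φ) + e^τ sin φ ] is the unique twice differentiable solution of θ''(τ) = θ'(τ) − a/b² − (ζ/b²) Σ_{k∈K} A_k sin(ω_k τ + φ) with θ(0) = θ₀ and θ'(0) = θ₁. -/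

import Mathlib

/-!
Writing the equation `θ'' = θ' - g` as the first-order system `(θ, θ')' = (θ', θ' - g)`, whose
right-hand side is `1`-Lipschitz, Gronwall's uniqueness theorem shows that a solution is
determined by `θ(0)` and `θ'(0)`. It then suffices to check that the explicit function solves
the problem: for each harmonic, `m(τ) = (cos(ωτ + φ) - cos φ)/ω - sin(ωτ + φ) + e^τ sin φ`
satisfies `m'' - m' = (1 + ω²) sin(ωτ + φ)`, `m(0) = 0` and `m'(0) = -ω cos φ`, and the
remaining part, `θ₀ + (a/b²) τ` plus a multiple of `e^τ - 1`, absorbs the constant forcing and the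
initial data.
-/

open Real

theorem eq_of_hasDerivAt_of_hasDerivAt_sub {y₁ y₁' y₂ y₂' g : ℝ → ℝ}
    (h₁ : ∀ t, HasDerivAt y₁ (y₁' t) t) (h₁' : ∀ t, HasDerivAt y₁' (y₁' t - g t) t)
    (h₂ : ∀ t, HasDerivAt y₂ (y₂' t) t) (h₂' : ∀ t, HasDerivAt y₂' (y₂' t - g t) t)
    (h0 : y₁ 0 = y₂ 0) (h0' : y₁' 0 = y₂' 0) : y₁ = y₂ := by
  let v : ℝ → ℝ × ℝ → ℝ × ℝ := fun t p => (p.2, p.2 - g t)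
  have hv : ∀ t, LipschitzOnWith 1 (v t) Set.univ := fun t =>
    (LipschitzWith.of_dist_le_mul fun p q => by
      simp [v, Prod.dist_eq]) |>.lipschitzOnWith
  have := ODE_solution_unique_univ (v := v) (t₀ := 0) hv
    (f := fun t => (y₁ t, y₁' t)) (g := fun t => (y₂ t, y₂' t))
    (fun t => ⟨(h₁ t).prodMk (h₁' t), trivial⟩) (fun t => ⟨(h₂ t).prodMk (h₂' t), trivial⟩)
    (Prod.ext h0 h0')
  funext t
  exact congrArg Prod.fst (congrFun this t)

theorem solution_iff_eq_of_hasDerivAt {F F' g : ℝ → ℝ} {θ₀ θ₁ : ℝ}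
    (hF : ∀ t, HasDerivAt F (F' t) t) (hF' : ∀ t, HasDerivAt F' (F' t - g t) t)
    (hF0 : F 0 = θ₀) (hF'0 : F' 0 = θ₁) (θ : ℝ → ℝ) :
    ((∀ τ, DifferentiableAt ℝ θ τ) ∧ (∀ τ, DifferentiableAt ℝ (deriv θ) τ) ∧
      (∀ τ, deriv (deriv θ) τ = deriv θ τ - g τ) ∧ θ 0 = θ₀ ∧ deriv θ 0 = θ₁) ↔
      ∀ τ, θ τ = F τ := by
  have hderiv : deriv F = F' := funext fun t => (hF t).deriv
  constructor
  · rintro ⟨hθ, hθ', hode, hθ0, hθ'0⟩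
    refine congrFun (eq_of_hasDerivAt_of_hasDerivAt_sub (fun t => (hθ t).hasDerivAt)
      (fun t => ?_) hF hF' (hθ0.trans hF0.symm) (hθ'0.trans hF'0.symm))
    exact hode t ▸ (hθ' t).hasDerivAt
  · intro h
    obtain rfl : θ = F := funext h
    rw [hderiv]
    exact ⟨fun t => (hF t).differentiableAt, fun t => (hF' t).differentiableAt,
      fun t => (hF' t).deriv, hF0, hF'0⟩

section FastOscillation

variable (ω φ : ℝ)

noncomputable def fastMode (t : ℝ) : ℝ :=
  (cos (ω * t + φ) - cos φ) / ω - sin (ω * t + φ) + exp t * sin φ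

noncomputable def fastModeDeriv (t : ℝ) : ℝ :=
  -sin (ω * t + φ) - ω * cos (ω * t + φ) + exp t * sin φ

variable {ω} in
theorem hasDerivAt_fastMode (hω : ω ≠ 0) (t : ℝ) :
    HasDerivAt (fastMode ω φ) (fastModeDeriv ω φ t) t := by
  have hlin : HasDerivAt (fun t : ℝ => ω * t + φ) ω t := by
    simpa using ((hasDerivAt_id t).const_mul ω).add_const φ
  have h := ((((hasDerivAt_cos _).comp t hlin).sub_const (cos φ)).div_const ω).fun_sub
    ((hasDerivAt_sin _).comp t hlin) |>.fun_add ((hasDerivAt_exp t).mul_const (sin φ))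
  refine h.congr_deriv ?_
  simp only [fastModeDeriv]
  field_simp

theorem hasDerivAt_fastModeDeriv (t : ℝ) :
    HasDerivAt (fastModeDeriv ω φ)
      (fastModeDeriv ω φ t + (1 + ω ^ 2) * sin (ω * t + φ)) t := by
  have hlin : HasDerivAt (fun t : ℝ => ω * t + φ) ω t := by
    simpa using ((hasDerivAt_id t).const_mul ω).add_const φ
  have h := (((hasDerivAt_sin _).comp t hlin).fun_neg.fun_sub
    (((hasDerivAt_cos _).comp t hlin).const_mul ω)).fun_add
    ((hasDerivAt_exp t).mul_const (sin φ))
  refine h.congr_deriv ?_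
  simp only [fastModeDeriv]
  ring

theorem fastMode_zero : fastMode ω φ 0 = 0 := by
  simp [fastMode]

theorem fastModeDeriv_zero : fastModeDeriv ω φ 0 = -(ω * cos φ) := by
  simp only [fastModeDeriv, mul_zero, zero_add, exp_zero, one_mul]
  ring

end FastOscillation

section FastPart

variable {ι : Type*} (K : Finset ι) (A ω : ι → ℝ) (φ : ℝ)

noncomputable def fastPart (t : ℝ) : ℝ :=
  ∑ k ∈ K, A k / (1 + ω k ^ 2) * fastMode (ω k) φ t

noncomputable def fastPartDeriv (t : ℝ) : ℝ :=
  ∑ k ∈ K, A k / (1 + ω k ^ 2) * fastModeDeriv (ω k) φ t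

variable {K ω} in
theorem hasDerivAt_fastPart (hω : ∀ k ∈ K, ω k ≠ 0) (t : ℝ) :
    HasDerivAt (fastPart K A ω φ) (fastPartDeriv K A ω φ t) t :=
  HasDerivAt.fun_sum fun k hk => (hasDerivAt_fastMode φ (hω k hk) t).const_mul _

theorem hasDerivAt_fastPartDeriv (t : ℝ) :
    HasDerivAt (fastPartDeriv K A ω φ)
      (fastPartDeriv K A ω φ t + ∑ k ∈ K, A k * sin (ω k * t + φ)) t := by
  have h := HasDerivAt.fun_sum (u := K) fun k _ =>
    (hasDerivAt_fastModeDeriv (ω k) φ t).const_mul (A k / (1 + ω k ^ 2))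
  refine h.congr_deriv ?_
  rw [fastPartDeriv, ← Finset.sum_add_distrib]
  refine Finset.sum_congr rfl fun k _ => ?_
  have : (1 : ℝ) + ω k ^ 2 ≠ 0 := by positivity
  field_simp

theorem fastPart_zero : fastPart K A ω φ 0 = 0 := by
  simp [fastPart, fastMode_zero]

theorem fastPartDeriv_zero :
    fastPartDeriv K A ω φ 0 = -(cos φ * ∑ k ∈ K, A k * ω k / (1 + ω k ^ 2)) := by
  simp only [fastPartDeriv, fastModeDeriv_zero, Finset.mul_sum, ← Finset.sum_neg_distrib]
  refine Finset.sum_congr rfl fun k _ => ?_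
  ring

end FastPart

theorem precapture_ode_unique_solution_general
    (a ζ b θ₀ θ₁ : ℝ)
    (K : Finset ℤ) (A ω : ℤ → ℝ) (hω : ∀ k ∈ K, ω k ≠ 0)
    (φ : ℝ) (θ : ℝ → ℝ) :
    ((∀ τ, DifferentiableAt ℝ θ τ) ∧ (∀ τ, DifferentiableAt ℝ (deriv θ) τ) ∧
      (∀ τ, deriv (deriv θ) τ = deriv θ τ - a / b ^ 2 -
        (ζ / b ^ 2) * ∑ k ∈ K, A k * Real.sin (ω k * τ + φ)) ∧
      θ 0 = θ₀ ∧ deriv θ 0 = θ₁)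
    ↔ (∀ τ, θ τ = θ₀ + (a / b ^ 2) * τ +
        (Real.exp τ - 1) * (θ₁ - a / b ^ 2 -
          (ζ / b ^ 2) * Real.cos φ * ∑ k ∈ K, A k * ω k / (1 + (ω k) ^ 2)) -
        (ζ / b ^ 2) * ∑ k ∈ K, (A k / (1 + (ω k) ^ 2)) *
          ((Real.cos (ω k * τ + φ) - Real.cos φ) / ω k - Real.sin (ω k * τ + φ)
            + Real.exp τ * Real.sin φ)) := by
  set c := a / b ^ 2
  set z := ζ / b ^ 2
  set C := θ₁ - c - z * cos φ * ∑ k ∈ K, A k * ω k / (1 + ω k ^ 2) with hC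
  have hF (t : ℝ) : HasDerivAt (fun t => θ₀ + c * t + (exp t - 1) * C - z * fastPart K A ω φ t)
      (c + exp t * C - z * fastPartDeriv K A ω φ t) t := by
    have h := ((((hasDerivAt_id t).const_mul c).const_add θ₀).fun_add
      (((hasDerivAt_exp t).sub_const 1).mul_const C)).fun_sub
      ((hasDerivAt_fastPart A φ hω t).const_mul z)
    exact h.congr_deriv (by simp)
  have hF' (t : ℝ) : HasDerivAt (fun t => c + exp t * C - z * fastPartDeriv K A ω φ t)
      (c + exp t * C - z * fastPartDeriv K A ω φ t -
        (c + z * ∑ k ∈ K, A k * sin (ω k * t + φ))) t := by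
    have h := (((hasDerivAt_exp t).mul_const C).const_add c).fun_sub
      ((hasDerivAt_fastPartDeriv K A ω φ t).const_mul z)
    exact h.congr_deriv (by ring)
  have key := solution_iff_eq_of_hasDerivAt (θ₀ := θ₀) (θ₁ := θ₁) hF hF'
    (by simp [fastPart_zero]) (by simp only [fastPartDeriv_zero, exp_zero, hC]; ring) θ
  simpa only [sub_sub, fastPart, fastMode] using key

/-- Equation (4.6): the explicit approximate pre-capture solution is the unique twice
differentiable solution of `θ'' = θ' - a/b² - (ζ/b²) ∑_k A_k sin(ω_k τ + φ)` with
`θ(0) = θ₀` and `θ'(0) = θ₁`, where `φ = 2θ₀`. -/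
theorem precapture_ode_unique_solution
    (a ζ b θ₀ θ₁ : ℝ) (hb : b ≠ 0)
    (K : Finset ℤ) (A ω : ℤ → ℝ) (hω : ∀ k ∈ K, ω k ≠ 0)
    (φ : ℝ) (hφ : φ = 2 * θ₀) (θ : ℝ → ℝ) :
    ((∀ τ, DifferentiableAt ℝ θ τ) ∧ (∀ τ, DifferentiableAt ℝ (deriv θ) τ) ∧
      (∀ τ, deriv (deriv θ) τ = deriv θ τ - a / b ^ 2 -
        (ζ / b ^ 2) * ∑ k ∈ K, A k * Real.sin (ω k * τ + φ)) ∧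
      θ 0 = θ₀ ∧ deriv θ 0 = θ₁)
    ↔ (∀ τ, θ τ = θ₀ + (a / b ^ 2) * τ +
        (Real.exp τ - 1) * (θ₁ - a / b ^ 2 -
          (ζ / b ^ 2) * Real.cos φ * ∑ k ∈ K, A k * ω k / (1 + (ω k) ^ 2)) -
        (ζ / b ^ 2) * ∑ k ∈ K, (A k / (1 + (ω k) ^ 2)) *
          ((Real.cos (ω k * τ + φ) - Real.cos φ) / ω k - Real.sin (ω k * τ + φ)
            + Real.exp τ * Real.sin φ)) :=
  precapture_ode_unique_solution_general a ζ b θ₀ θ₁ K A ω hω φ θ
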